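/- Let a : ℕ → ℕ (indexed from 1) satisfy: a(1) = 1, a(2) = 2, and for every n ≥ 2, a(n+1) is the smallest positive integer not among a(1), …, a(n) whose greatest common divisor with a(n) exceeds 1. If p is a prime such that every positive multiple of p occurs as a term of the sequence, then every positive integer occurs as a term of the sequence. -/

import Mathlib

/-!
Suppose `m` never occurs. Whenever `a n` shares a factor with `m`, the number `m` is an unused
candidate for `a (n + 1)`, so `a (n + 1) < m`. As the sequence is injective, this can happen for
only finitely many `n`. But the multiples `m * p, 2 * m * p, …` of `m` all occur, at distinct
positions.
-/

/-- The EKG sequence property: `a 1 = 1`, `a 2 = 2`, and for `n ≥ 2`,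
`a (n+1)` is the smallest positive integer not among `a 1, …, a n`
whose gcd with `a n` exceeds 1. -/
def IsEKG (a : ℕ → ℕ) : Prop :=
  a 1 = 1 ∧ a 2 = 2 ∧
    ∀ n, 2 ≤ n →
      IsLeast {m : ℕ | 0 < m ∧ (∀ i, 1 ≤ i → i ≤ n → a i ≠ m) ∧
        1 < Nat.gcd m (a n)} (a (n + 1))

namespace IsEKG

variable {a : ℕ → ℕ}

theorem injOn (ha : IsEKG a) : Set.InjOn a (Set.Ici 1) := by
  obtain ⟨h1, h2, hmin⟩ := ha
  have hlt : ∀ i j, 1 ≤ i → i < j → a i ≠ a j := by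
    intro i j hi hij
    obtain hj | hj := Nat.lt_or_ge j 3
    · obtain rfl : i = 1 := by omega
      obtain rfl : j = 2 := by omega
      simp [h1, h2]
    · have hmem := (hmin (j - 1) (by omega)).1.2.1 i hi (by omega)
      rwa [Nat.sub_add_cancel (by omega : 1 ≤ j)] at hmem
  intro i hi j hj hij
  by_contra hne
  obtain h | h := Nat.lt_or_gt_of_ne hne
  · exact hlt i j hi h hij
  · exact hlt j i hj h hij.symm

theorem succ_lt_of_one_lt_gcd (ha : IsEKG a) {m n : ℕ} (hm_pos : 0 < m)
    (hm : ∀ i, 1 ≤ i → a i ≠ m) (hn : 2 ≤ n) (hgcd : 1 < Nat.gcd m (a n)) : a (n + 1) < m := by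
  have hle : a (n + 1) ≤ m :=
    (ha.2.2 n hn).2 ⟨hm_pos, fun i hi _ => hm i hi, hgcd⟩
  exact lt_of_le_of_ne hle (hm (n + 1) (by omega))

theorem finite_setOf_one_lt_gcd (ha : IsEKG a) {m : ℕ} (hm_pos : 0 < m)
    (hm : ∀ i, 1 ≤ i → a i ≠ m) :
    {n | 2 ≤ n ∧ 1 < Nat.gcd m (a n)}.Finite := by
  have hinj : Set.InjOn (a ∘ (· + 1)) {n | 2 ≤ n ∧ 1 < Nat.gcd m (a n)} :=
    ha.injOn.comp (add_left_injective 1).injOn fun n _ => by simp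
  refine Set.Finite.of_finite_image ((Set.finite_Iio m).subset ?_) hinj
  rintro _ ⟨n, ⟨hn, hgcd⟩, rfl⟩
  exact ha.succ_lt_of_one_lt_gcd hm_pos hm hn hgcd

end IsEKG

theorem ekg_all_numbers_of_multiples (a : ℕ → ℕ) (ha : IsEKG a) (p : ℕ) (hp : p.Prime)
    (hall : ∀ k : ℕ, 1 ≤ k → ∃ n : ℕ, 1 ≤ n ∧ a n = k * p) :
    ∀ m : ℕ, 1 ≤ m → ∃ n : ℕ, 1 ≤ n ∧ a n = m := by
  intro m hm
  by_contra! hmiss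
  have hm1 : 1 < m := lt_of_le_of_ne hm fun h => hmiss 1 le_rfl (ha.1.trans h)
  choose N hN1 hN using fun k : ℕ => hall ((k + 1) * m) (by nlinarith)
  have hNinj : Function.Injective N := by
    refine Function.Injective.of_comp (f := a) fun k l hkl => ?_
    simp only [Function.comp_apply, hN] at hkl
    have := Nat.eq_of_mul_eq_mul_right (by omega) (Nat.eq_of_mul_eq_mul_right hp.pos hkl)
    omega
  refine (ha.finite_setOf_one_lt_gcd hm hmiss).not_infinite
    (Set.infinite_of_injective_forall_mem hNinj fun k => ?_)
  have hgcd : 1 < Nat.gcd m (a (N k)) := by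
    rwa [hN, mul_comm (k + 1), mul_assoc, Nat.gcd_mul_right_right]
  have hN2 : N k ≠ 1 := fun h => by simp [h, ha.1] at hgcd
  exact ⟨by have := hN1 k; omega, hgcd⟩
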